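/- arXiv:math/0302275 — 3 statements merged into one kernel-verified Lean document; each statement's English description precedes it below -/
import Mathlib

section
/- Let S be a hyponormal unilateral weighted shift on H with nonzero weight sequence (α_n)_{n≥1} and M = lim_{n→∞} |α_n|. Then the continuous spectrum of S is exactly the circle {λ ∈ ℂ : |λ| = M}; that is, the set of λ in the spectrum of S for which λI − S is injective and has dense range equals {λ : |λ| = M}. -/
/-! In coordinates `S` shifts and multiplies by the weights, so `μ • 1 - S` is injective for
every `μ`, and `y` lies in the kernel of its adjoint iff `conj μ * y n = conj (α n) * y (n + 1)`.
If `‖α n‖ ≤ M ≤ ‖μ‖` for all `n`, the moduli `‖y n‖` of such a `y` are nondecreasing and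
square-summable, so `y = 0` and `μ • 1 - S` has dense range. If `‖μ‖ < M`, the ratio test makes
`y n = ∏ k < n, conj μ / conj (α k)` square-summable, so the range is not dense and `μ ∈ σ(S)`;
since `‖S‖ ≤ M` and the spectrum is closed, `σ(S)` is the closed disc of radius `M`. -/

open Filter Topology Metric
open scoped ComplexConjugate

section

variable {𝕜 H : Type*} [RCLike 𝕜] [NormedAddCommGroup H] [InnerProductSpace 𝕜 H]

theorem HilbertBasis.hasSum_norm_sq_repr {ι : Type*} (b : HilbertBasis ι 𝕜 H) (x : H) :
    HasSum (fun i => ‖b.repr x i‖ ^ 2) (‖x‖ ^ 2) := by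
  simpa using lp.hasSum_norm (p := 2) (by norm_num) (b.repr x)

theorem memℓp_two_of_summable_sq {ι E : Type*} [NormedAddCommGroup E] {f : ι → E} 
    (hf : Summable fun i => ‖f i‖ ^ 2) : Memℓp f 2 :=
  memℓp_gen (by simpa using hf)

theorem ContinuousLinearMap.denseRange_iff_ker_adjoint_eq_bot [CompleteSpace H]
    (T : H →L[𝕜] H) : DenseRange T ↔ (adjoint T).ker = ⊥ := by
  rw [← orthogonal_range, ← Submodule.topologicalClosure_eq_top_iff,
    ← Submodule.dense_iff_topologicalClosure_eq_top]
  simp [DenseRange, LinearMap.coe_range]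

theorem ContinuousLinearMap.denseRange_of_notMem_spectrum [CompleteSpace H] {T : H →L[𝕜] H}
    {μ : 𝕜} (h : μ ∉ spectrum 𝕜 T) : DenseRange ⇑(μ • (1 : H →L[𝕜] H) - T) := by
  rw [spectrum.notMem_iff, Algebra.algebraMap_eq_smul_one, isUnit_iff_bijective] at h
  exact h.2.denseRange

theorem memℓp_two_prod_range_div {c : 𝕜} {β : ℕ → 𝕜} {M : ℝ}
    (hβ : Tendsto (fun n => ‖β n‖) atTop (𝓝 M)) (hc : ‖c‖ < M) :
    Memℓp (fun n => ∏ k ∈ Finset.range n, c / β k) 2 := by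
  obtain ⟨r, hcr, hrM⟩ := exists_between hc
  have hr : 0 < r := (norm_nonneg c).trans_lt hcr
  refine memℓp_two_of_summable_sq (summable_of_ratio_norm_eventually_le (r := (‖c‖ / r) ^ 2)
    (pow_lt_one₀ (by positivity) ((div_lt_one hr).mpr hcr) two_ne_zero) ?_)
  filter_upwards [hβ.eventually (eventually_gt_nhds hrM)] with n hn
  simp only [Finset.prod_range_succ, norm_mul, norm_div, norm_pow, norm_norm, mul_pow]
  rw [mul_comm]
  gcongr

def IsUnilateralWeightedShift (e : HilbertBasis ℕ 𝕜 H) (α : ℕ → 𝕜) (S : H →L[𝕜] H) : Prop :=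
  ∀ n, S (e n) = α n • e (n + 1)

namespace IsUnilateralWeightedShift

variable [CompleteSpace H] {e : HilbertBasis ℕ 𝕜 H} {α : ℕ → 𝕜} {S : H →L[𝕜] H}
  (hS : IsUnilateralWeightedShift e α S)
include hS

open ContinuousLinearMap

theorem adjoint_apply_zero : adjoint S (e 0) = 0 :=
  e.repr.injective <| lp.ext <| funext fun n => by
    simp [e.repr_apply_apply, adjoint_inner_right, hS n, inner_smul_left,
      orthonormal_iff_ite.mp e.orthonormal]

theorem adjoint_apply_succ (m : ℕ) : adjoint S (e (m + 1)) = conj (α m) • e m :=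
  e.repr.injective <| lp.ext <| funext fun n => by
    simp only [e.repr_apply_apply, adjoint_inner_right, hS n, inner_smul_left, inner_smul_right,
      orthonormal_iff_ite.mp e.orthonormal, add_left_inj]
    split_ifs with h <;> simp [h]

theorem repr_apply_zero (x : H) : e.repr (S x) 0 = 0 := by
  rw [e.repr_apply_apply, ← adjoint_inner_left, hS.adjoint_apply_zero, inner_zero_left]

theorem repr_apply_succ (x : H) (n : ℕ) : e.repr (S x) (n + 1) = α n * e.repr x n := by
  rw [e.repr_apply_apply, ← adjoint_inner_left, hS.adjoint_apply_succ, inner_smul_left,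
    e.repr_apply_apply, RCLike.conj_conj]

theorem norm_apply_le {C : ℝ} (hC : ∀ n, ‖α n‖ ≤ C) (x : H) : ‖S x‖ ≤ C * ‖x‖ := by
  have hC₀ : 0 ≤ C := (norm_nonneg _).trans (hC 0)
  have hSx : HasSum (fun n => ‖e.repr (S x) (n + 1)‖ ^ 2) (‖S x‖ ^ 2) := by
    simpa [hS.repr_apply_zero] using (hasSum_nat_add_iff' 1).mpr (e.hasSum_norm_sq_repr (S x))
  have hsq : ‖S x‖ ^ 2 ≤ (C * ‖x‖) ^ 2 := by
    rw [mul_pow]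
    refine hasSum_le (fun n => ?_) hSx ((e.hasSum_norm_sq_repr x).mul_left (C ^ 2))
    rw [hS.repr_apply_succ, norm_mul, mul_pow]
    gcongr
    exact hC n
  exact pow_le_pow_iff_left₀ (norm_nonneg _) (by positivity) two_ne_zero |>.mp hsq

theorem opNorm_le {C : ℝ} (hC : ∀ n, ‖α n‖ ≤ C) : ‖S‖ ≤ C :=
  S.opNorm_le_bound ((norm_nonneg _).trans (hC 0)) (hS.norm_apply_le hC)

theorem injective_sub (hα : ∀ n, α n ≠ 0) (μ : 𝕜) :
    Function.Injective ⇑(μ • (1 : H →L[𝕜] H) - S) := by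
  rw [injective_iff_map_eq_zero]
  intro x hx
  have hx' : μ • x = S x := by simpa [sub_eq_zero] using hx
  have hcoeff : ∀ n, μ * e.repr x n = e.repr (S x) n := fun n => by
    simpa using congr_arg (fun v => e.repr v n) hx'
  refine e.repr.map_eq_zero_iff.mp <| lp.ext <| funext fun n => ?_
  rcases eq_or_ne μ 0 with rfl | hμ
  · simpa [hα n, hS.repr_apply_succ] using (hcoeff (n + 1)).symm
  · induction n with
    | zero => simpa [hμ, hS.repr_apply_zero] using hcoeff 0
    | succ n ih => simpa [hμ, hS.repr_apply_succ, ih] using hcoeff (n + 1)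

theorem repr_adjoint_sub_apply (μ : 𝕜) (y : H) (n : ℕ) :
    e.repr (adjoint (μ • (1 : H →L[𝕜] H) - S) y) n
      = conj μ * e.repr y n - conj (α n) * e.repr y (n + 1) := by
  simp [e.repr_apply_apply, adjoint_inner_right, hS n, inner_smul_left]

theorem ker_adjoint_sub_eq_bot {μ : 𝕜} (hμ : μ ≠ 0) (hαμ : ∀ n, ‖α n‖ ≤ ‖μ‖) :
    (adjoint (μ • (1 : H →L[𝕜] H) - S)).ker = ⊥ := by
  refine (Submodule.eq_bot_iff _).mpr fun y (hy : adjoint (μ • (1 : H →L[𝕜] H) - S) y = 0) => ?_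
  have hrec : ∀ n, ‖μ‖ * ‖e.repr y n‖ = ‖α n‖ * ‖e.repr y (n + 1)‖ := fun n => by
    have h := hS.repr_adjoint_sub_apply μ y n
    rw [hy, map_zero, lp.coeFn_zero, Pi.zero_apply, eq_comm, sub_eq_zero] at h
    simpa using congr_arg norm h
  have hmono : Monotone fun n => ‖e.repr y n‖ ^ 2 := monotone_nat_of_le_succ fun n => by
    gcongr
    refine le_of_mul_le_mul_left ?_ (norm_pos_iff.mpr hμ)
    rw [hrec]
    gcongr
    exact hαμ n
  refine e.repr.map_eq_zero_iff.mp <| lp.ext <| funext fun n => ?_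
  simpa using hmono.ge_of_tendsto (e.hasSum_norm_sq_repr y).summable.tendsto_atTop_zero n

theorem ker_adjoint_sub_ne_bot (hα : ∀ n, α n ≠ 0) {M : ℝ}
    (hM : Tendsto (fun n => ‖α n‖) atTop (𝓝 M)) {μ : 𝕜} (hμ : ‖μ‖ < M) :
    (adjoint (μ • (1 : H →L[𝕜] H) - S)).ker ≠ ⊥ := by
  have hf := memℓp_two_prod_range_div (c := conj μ) (β := fun n => conj (α n))
    (by simpa using hM) (by simpa using hμ)
  set y := e.repr.symm ⟨_, hf⟩
  have hy : ∀ n, e.repr y n = ∏ k ∈ Finset.range n, conj μ / conj (α k) := fun n => by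
    simp [y]
  refine (Submodule.ne_bot_iff _).mpr ⟨y, ?_, fun h0 => by simpa [h0] using hy 0⟩
  change adjoint (μ • (1 : H →L[𝕜] H) - S) y = 0
  refine e.repr.map_eq_zero_iff.mp <| lp.ext <| funext fun n => ?_
  have hαn : conj (α n) ≠ 0 := by simpa using hα n
  rw [hS.repr_adjoint_sub_apply, hy, hy, Finset.prod_range_succ]
  field_simp
  simp

theorem not_denseRange_sub (hα : ∀ n, α n ≠ 0) {M : ℝ}
    (hM : Tendsto (fun n => ‖α n‖) atTop (𝓝 M)) {μ : 𝕜} (hμ : ‖μ‖ < M) :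
    ¬ DenseRange ⇑(μ • (1 : H →L[𝕜] H) - S) := fun h =>
  hS.ker_adjoint_sub_ne_bot hα hM hμ ((denseRange_iff_ker_adjoint_eq_bot _).mp h)

theorem denseRange_sub_iff (hα : ∀ n, α n ≠ 0) {M : ℝ} (hαM : ∀ n, ‖α n‖ ≤ M)
    (hM : Tendsto (fun n => ‖α n‖) atTop (𝓝 M)) (μ : 𝕜) :
    DenseRange ⇑(μ • (1 : H →L[𝕜] H) - S) ↔ M ≤ ‖μ‖ := by
  refine ⟨fun h => not_lt.mp fun hμ => hS.not_denseRange_sub hα hM hμ h, fun hμ => ?_⟩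
  have hμ₀ : μ ≠ 0 := norm_pos_iff.mp ((norm_pos_iff.mpr (hα 0)).trans_le ((hαM 0).trans hμ))
  exact (denseRange_iff_ker_adjoint_eq_bot _).mpr
    (hS.ker_adjoint_sub_eq_bot hμ₀ fun n => (hαM n).trans hμ)

theorem spectrum_eq_closedBall (hα : ∀ n, α n ≠ 0) {M : ℝ} (hαM : ∀ n, ‖α n‖ ≤ M)
    (hM : Tendsto (fun n => ‖α n‖) atTop (𝓝 M)) :
    spectrum 𝕜 S = closedBall 0 M := by
  have : Nontrivial H := nontrivial_of_ne (e 0) 0 (e.orthonormal.ne_zero 0)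
  have hM₀ : 0 < M := (norm_pos_iff.mpr (hα 0)).trans_le (hαM 0)
  refine ((spectrum.subset_closedBall_norm S).trans
    (closedBall_subset_closedBall (hS.opNorm_le hαM))).antisymm ?_
  rw [← closure_ball 0 hM₀.ne']
  refine closure_minimal (fun μ hμ => ?_) (spectrum.isClosed S)
  by_contra hμS
  exact hS.not_denseRange_sub hα hM (mem_ball_zero_iff.mp hμ)
    (denseRange_of_notMem_spectrum hμS)

end IsUnilateralWeightedShift

end

/-- The continuous spectrum of a hyponormal unilateral weighted shift with nonzero
weights is exactly the circle of radius `M = lim ‖α n‖`. -/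
theorem continuousSpectrum_of_hyponormal_unilateral_weighted_shift
    {H : Type*} [NormedAddCommGroup H] [InnerProductSpace ℂ H] [CompleteSpace H]
    (e : HilbertBasis ℕ ℂ H) (α : ℕ → ℂ) (S : H →L[ℂ] H)
    (hS : ∀ n : ℕ, S (e n) = α n • e (n + 1))
    (hmono : ∀ n : ℕ, ‖α n‖ ≤ ‖α (n + 1)‖)
    (hnz : ∀ n : ℕ, α n ≠ 0)
    (M : ℝ) (hM : Filter.Tendsto (fun n : ℕ => ‖α n‖) Filter.atTop (nhds M)) :
    {lam : ℂ | lam ∈ spectrum ℂ S ∧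
        Function.Injective ⇑(lam • (1 : H →L[ℂ] H) - S) ∧
        DenseRange ⇑(lam • (1 : H →L[ℂ] H) - S)}
      = {lam : ℂ | ‖lam‖ = M} := by
  have hshift : IsUnilateralWeightedShift e α S := hS
  have hαM : ∀ n, ‖α n‖ ≤ M := (monotone_nat_of_le_succ hmono).ge_of_tendsto hM
  ext μ
  simp only [Set.mem_ofPred_eq, hshift.spectrum_eq_closedBall hnz hαM hM, mem_closedBall_zero_iff,
    hshift.injective_sub hnz μ, hshift.denseRange_sub_iff hnz hαM hM μ, true_and]
  exact ⟨fun h => h.1.antisymm h.2, fun h => ⟨h.le, h.ge⟩⟩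
end

section
/- Let S be a hyponormal unilateral weighted shift on H with nonzero weight sequence (α_n)_{n≥1} and M = lim_{n→∞} |α_n|. Then the approximate point spectrum of the adjoint S* is the whole closed disk {λ ∈ ℂ : |λ| ≤ M}; that is, λI − S* fails to be bounded below if and only if |λ| ≤ M. -/
/-!
The adjoint shifts coordinates backwards, `⟪e k, S* x⟫ = conj (α k) ⟪e (k + 1), x⟫`, so Parseval
gives `‖S*‖ ≤ sup ‖α n‖ = M` and `λ - S*` is bounded below as soon as `‖λ‖ > M`.
Conversely, for `‖μ‖ < M` the vector with coordinates `c 0 = 1`, `c (n + 1) = μ c n / conj (α n)`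
is square-summable by the ratio test (`‖c (n + 1)‖ / ‖c n‖ → ‖μ‖ / M < 1`) and is an eigenvector
of `S*` for `μ`. Bounded-below operators form an open set, so the approximate point spectrum is
closed and contains the closure of the open disk of radius `M`.
-/

open Filter Topology Metric ContinuousLinearMap
open scoped InnerProductSpace

namespace ContinuousLinearMap

variable {𝕜 E F : Type*} [NontriviallyNormedField 𝕜] [NormedAddCommGroup E] [NormedSpace 𝕜 E]
  [NormedAddCommGroup F] [NormedSpace 𝕜 F]

def IsBoundedBelow (T : E →L[𝕜] F) : Prop :=
  ∃ c : ℝ, 0 < c ∧ ∀ x, c * ‖x‖ ≤ ‖T x‖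

theorem isOpen_setOf_isBoundedBelow : IsOpen {T : E →L[𝕜] F | T.IsBoundedBelow} := by
  refine Metric.isOpen_iff.2 fun T ⟨c, hc, hT⟩ => ⟨c / 2, half_pos hc, fun T' hT' => ?_⟩
  refine ⟨c / 2, half_pos hc, fun x => ?_⟩
  have hdist : ‖(T - T') x‖ ≤ c / 2 * ‖x‖ := by
    rw [mem_ball, dist_eq_norm'] at hT'
    exact (le_opNorm _ x).trans (mul_le_mul_of_nonneg_right hT'.le (norm_nonneg x))
  calc c / 2 * ‖x‖ = c * ‖x‖ - c / 2 * ‖x‖ := by ring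
    _ ≤ ‖T x‖ - ‖(T - T') x‖ := by gcongr; exact hT x
    _ ≤ ‖T' x‖ := by
      rw [sub_apply]
      linarith [norm_sub_norm_le (T x) (T x - T' x), norm_sub_norm_le (T x) (T' x)]

theorem smul_one_sub_apply (T : E →L[𝕜] E) (lam : 𝕜) (x : E) :
    (lam • (1 : E →L[𝕜] E) - T) x = lam • x - T x := by
  simp

def approxPointSpectrum (T : E →L[𝕜] E) : Set 𝕜 :=
  {lam | ¬ (lam • (1 : E →L[𝕜] E) - T).IsBoundedBelow}

theorem isClosed_approxPointSpectrum (T : E →L[𝕜] E) : IsClosed (approxPointSpectrum T) := by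
  have hopen : IsOpen ((fun lam : 𝕜 => lam • (1 : E →L[𝕜] E) - T) ⁻¹' {S | S.IsBoundedBelow}) :=
    isOpen_setOf_isBoundedBelow.preimage (by fun_prop)
  rw [← isOpen_compl_iff, approxPointSpectrum, Set.compl_ofPred]
  simp only [not_not]
  exact hopen

theorem mem_approxPointSpectrum_of_apply_eq_smul {T : E →L[𝕜] E} {μ : 𝕜} {x : E} (hx : x ≠ 0)
    (hTx : T x = μ • x) : μ ∈ approxPointSpectrum T := by
  rintro ⟨c, hc, hbound⟩
  have := hbound x
  rw [smul_one_sub_apply, hTx, sub_self, norm_zero] at this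
  exact (mul_pos hc (norm_pos_iff.2 hx)).not_ge this

theorem approxPointSpectrum_subset_closedBall (T : E →L[𝕜] E) :
    approxPointSpectrum T ⊆ closedBall 0 ‖T‖ := by
  intro lam hlam
  rw [mem_closedBall_zero_iff]
  by_contra! hlt
  refine hlam ⟨‖lam‖ - ‖T‖, sub_pos.2 hlt, fun x => ?_⟩
  calc (‖lam‖ - ‖T‖) * ‖x‖ = ‖lam • x‖ - ‖T‖ * ‖x‖ := by rw [norm_smul]; ring
    _ ≤ ‖lam • x‖ - ‖T x‖ := by gcongr; exact le_opNorm T x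
    _ ≤ ‖(lam • (1 : E →L[𝕜] E) - T) x‖ := by
      rw [smul_one_sub_apply]; exact norm_sub_norm_le (lam • x) (T x)

end ContinuousLinearMap

namespace HilbertBasis

variable {ι 𝕜 E : Type*} [RCLike 𝕜] [NormedAddCommGroup E] [InnerProductSpace 𝕜 E]
  (b : HilbertBasis ι 𝕜 E)

theorem hasSum_norm_inner_sq (x : E) : HasSum (fun i => ‖⟪b i, x⟫_𝕜‖ ^ 2) (‖x‖ ^ 2) := by
  have h := lp.hasSum_norm (p := 2) (by norm_num) (b.repr x)
  simpa only [ENNReal.toReal_ofNat, Real.rpow_two, b.repr_apply_apply,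
    LinearIsometryEquiv.norm_map] using h

theorem norm_le_mul_norm_of_norm_inner_le {g : ι → ι} (hg : Function.Injective g) {C : ℝ}
    (hC : 0 ≤ C) {x y : E} (h : ∀ i, ‖⟪b i, y⟫_𝕜‖ ≤ C * ‖⟪b (g i), x⟫_𝕜‖) : ‖y‖ ≤ C * ‖x‖ := by
  have hx := b.hasSum_norm_inner_sq x
  have hxg : Summable fun i => ‖⟪b (g i), x⟫_𝕜‖ ^ 2 := hx.summable.comp_injective hg
  refine (sq_le_sq₀ (norm_nonneg y) (by positivity)).1 ?_
  calc ‖y‖ ^ 2 = ∑' i, ‖⟪b i, y⟫_𝕜‖ ^ 2 := (b.hasSum_norm_inner_sq y).tsum_eq.symm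
    _ ≤ ∑' i, C ^ 2 * ‖⟪b (g i), x⟫_𝕜‖ ^ 2 :=
      (b.hasSum_norm_inner_sq y).summable.tsum_le_tsum
        (fun i => by rw [← mul_pow]; gcongr; exact h i) (hxg.mul_left _)
    _ = C ^ 2 * ∑' i, ‖⟪b (g i), x⟫_𝕜‖ ^ 2 := tsum_mul_left
    _ ≤ C ^ 2 * ‖x‖ ^ 2 := by
      rw [← hx.tsum_eq]
      exact mul_le_mul_of_nonneg_left (hxg.tsum_le_tsum_of_inj g hg (fun _ _ => by positivity)
        (fun _ => le_rfl) hx.summable) (by positivity)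
    _ = (C * ‖x‖) ^ 2 := by ring

theorem exists_inner_eq_of_summable {c : ι → 𝕜} (hc : Summable fun i => ‖c i‖ ^ 2) :
    ∃ x : E, ∀ i, ⟪b i, x⟫_𝕜 = c i := by
  have hmem : Memℓp c 2 := memℓp_gen (by simpa only [ENNReal.toReal_ofNat, Real.rpow_two] using hc)
  exact ⟨b.repr.symm ⟨c, hmem⟩, fun i => by
    rw [← b.repr_apply_apply, LinearIsometryEquiv.apply_symm_apply]⟩

theorem ext_inner {x y : E} (h : ∀ i, ⟪b i, x⟫_𝕜 = ⟪b i, y⟫_𝕜) : x = y :=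
  b.repr.injective <| lp.ext <| funext fun i => by simp only [b.repr_apply_apply, h]

end HilbertBasis

section WeightedShift

variable {𝕜 H : Type*} [RCLike 𝕜] [NormedAddCommGroup H] [InnerProductSpace 𝕜 H] [CompleteSpace H]
  (e : HilbertBasis ℕ 𝕜 H) {α : ℕ → 𝕜} {S : H →L[𝕜] H}

theorem inner_adjoint_weightedShift (hS : ∀ n, S (e n) = α n • e (n + 1)) (x : H) (k : ℕ) :
    ⟪e k, adjoint S x⟫_𝕜 = (starRingEnd 𝕜) (α k) * ⟪e (k + 1), x⟫_𝕜 := by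
  rw [adjoint_inner_right, hS k, inner_smul_left]

theorem norm_adjoint_weightedShift_le (hS : ∀ n, S (e n) = α n • e (n + 1)) {M : ℝ}
    (hle : ∀ n, ‖α n‖ ≤ M) : ‖adjoint S‖ ≤ M := by
  have hM : 0 ≤ M := (norm_nonneg _).trans (hle 0)
  refine opNorm_le_bound _ hM fun x => e.norm_le_mul_norm_of_norm_inner_le (add_left_injective 1)
    hM fun k => ?_
  rw [inner_adjoint_weightedShift e hS, norm_mul, RCLike.norm_conj]
  exact mul_le_mul_of_nonneg_right (hle k) (norm_nonneg _)

def shiftAdjointEigencoeff (α : ℕ → 𝕜) (μ : 𝕜) : ℕ → 𝕜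
  | 0 => 1
  | n + 1 => μ * shiftAdjointEigencoeff α μ n / (starRingEnd 𝕜) (α n)

theorem summable_norm_shiftAdjointEigencoeff_sq {M : ℝ}
    (hM : Tendsto (fun n => ‖α n‖) atTop (𝓝 M)) {μ : 𝕜} (hμ : ‖μ‖ < M) :
    Summable fun n => ‖shiftAdjointEigencoeff α μ n‖ ^ 2 := by
  have hM0 : 0 < M := (norm_nonneg μ).trans_lt hμ
  have hratio : Tendsto (fun n => (‖μ‖ / ‖α n‖) ^ 2) atTop (𝓝 ((‖μ‖ / M) ^ 2)) :=
    (tendsto_const_nhds.div hM hM0.ne').pow 2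
  have hlt : (‖μ‖ / M) ^ 2 < 1 := by
    rw [sq_lt_one_iff₀ (by positivity)]
    exact (div_lt_one hM0).2 hμ
  obtain ⟨q, hq, hq1⟩ := exists_between hlt
  refine summable_of_ratio_norm_eventually_le hq1 ?_
  filter_upwards [hratio.eventually (eventually_le_nhds hq)] with n hn
  simp only [Real.norm_of_nonneg (sq_nonneg _)]
  calc ‖shiftAdjointEigencoeff α μ (n + 1)‖ ^ 2
      = (‖μ‖ / ‖α n‖) ^ 2 * ‖shiftAdjointEigencoeff α μ n‖ ^ 2 := by
        simp only [shiftAdjointEigencoeff, norm_div, norm_mul, RCLike.norm_conj]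
        ring
    _ ≤ q * ‖shiftAdjointEigencoeff α μ n‖ ^ 2 := by gcongr

theorem exists_adjoint_weightedShift_eq_smul (hS : ∀ n, S (e n) = α n • e (n + 1))
    (hnz : ∀ n, α n ≠ 0) {M : ℝ} (hM : Tendsto (fun n => ‖α n‖) atTop (𝓝 M)) {μ : 𝕜}
    (hμ : ‖μ‖ < M) : ∃ x : H, x ≠ 0 ∧ adjoint S x = μ • x := by
  obtain ⟨x, hx⟩ := e.exists_inner_eq_of_summable (summable_norm_shiftAdjointEigencoeff_sq hM hμ)
  refine ⟨x, fun h0 => by simpa [h0, shiftAdjointEigencoeff] using hx 0, e.ext_inner fun k => ?_⟩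
  rw [inner_adjoint_weightedShift e hS, inner_smul_right, hx, hx, shiftAdjointEigencoeff,
    mul_div_cancel₀ _ ((map_ne_zero _).2 (hnz k))]

end WeightedShift

/-- The approximate point spectrum of the adjoint of a hyponormal unilateral
weighted shift with nonzero weights is the whole closed disk of radius
`M = lim ‖α n‖`: `λI - S*` fails to be bounded below iff `‖λ‖ ≤ M`. -/
theorem approxPointSpectrum_adjoint_of_hyponormal_unilateral_weighted_shift
    {H : Type*} [NormedAddCommGroup H] [InnerProductSpace ℂ H] [CompleteSpace H]
    (e : HilbertBasis ℕ ℂ H) (α : ℕ → ℂ) (S : H →L[ℂ] H)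
    (hS : ∀ n : ℕ, S (e n) = α n • e (n + 1))
    (hmono : ∀ n : ℕ, ‖α n‖ ≤ ‖α (n + 1)‖)
    (hnz : ∀ n : ℕ, α n ≠ 0)
    (M : ℝ) (hM : Filter.Tendsto (fun n : ℕ => ‖α n‖) Filter.atTop (nhds M)) :
    {lam : ℂ | ¬ ∃ c : ℝ, 0 < c ∧ ∀ x : H,
        c * ‖x‖ ≤ ‖(lam • (1 : H →L[ℂ] H) - ContinuousLinearMap.adjoint S) x‖}
      = {lam : ℂ | ‖lam‖ ≤ M} := by
  have hle : ∀ n, ‖α n‖ ≤ M := (monotone_nat_of_le_succ hmono).ge_of_tendsto hM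
  have hM0 : M ≠ 0 := ((norm_pos_iff.2 (hnz 0)).trans_le (hle 0)).ne'
  have hball : ball 0 M ⊆ approxPointSpectrum (adjoint S) := fun μ hμ => by
    obtain ⟨x, hx0, hx⟩ := exists_adjoint_weightedShift_eq_smul e hS hnz hM (mem_ball_zero_iff.1 hμ)
    exact mem_approxPointSpectrum_of_apply_eq_smul hx0 hx
  have hclosedBall : closedBall 0 M ⊆ approxPointSpectrum (adjoint S) := by
    rw [← closure_ball 0 hM0]
    exact closure_minimal hball (isClosed_approxPointSpectrum _)
  have hspec : approxPointSpectrum (adjoint S) = closedBall 0 M :=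
    ((approxPointSpectrum_subset_closedBall _).trans
      (closedBall_subset_closedBall (norm_adjoint_weightedShift_le e hS hle))).antisymm hclosedBall
  ext lam
  exact (Set.ext_iff.1 hspec lam).trans mem_closedBall_zero_iff
end

section
/- Let T be a hyponormal bilateral weighted shift on H with nonzero weight sequence (β_n)_{n∈ℤ}. Then T has no eigenvalues; i.e., for every complex number λ, the kernel of λI − T is {0} (equivalently, the point spectrum σ_p(T) is empty). -/
/-!
If `T x = λ x`, the coefficients `aₙ = ⟪eₙ, x⟫` satisfy `λ aₙ₊₁ = βₙ aₙ` and tend to `0` at both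
ends of `ℤ` (Bessel). For `λ ≠ 0` this recurrence gives `‖aₙ‖ ≤ ‖aₙ₊₁‖` whenever `‖λ‖ ≤ ‖βₙ‖`, and the
reverse inequality whenever `‖βₙ‖ ≤ ‖λ‖`. Since `‖βₙ‖` is nondecreasing, either `‖λ‖ ≤ ‖βₙ‖` from some
`N` on, so `‖aₙ‖` is nondecreasing on `[N, ∞)` and hence `0` there, and then `0` everywhere because the
weights do not vanish; or `‖βₙ‖ < ‖λ‖` for all `n`, so `‖aₙ‖` is nonincreasing on `ℤ` and hence `0`
since it tends to `0` at `-∞`.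
-/

open Filter Topology

section WeightedRecurrence

variable {𝕜 : Type*} [NormedDivisionRing 𝕜] {a β : ℤ → 𝕜} {lam : 𝕜} {n : ℤ}

theorem eq_zero_of_forall_ge_eq_zero_of_mul_eq_mul_succ (hβ : ∀ n, β n ≠ 0)
    (hrec : ∀ n, β n * a n = lam * a (n + 1)) {N : ℤ} (hN : ∀ n, N ≤ n → a n = 0) : a = 0 := by
  funext n
  rcases le_or_gt N n with h | h
  · exact hN n h
  refine Int.leInductionDown (motive := fun n _ => a n = 0) (hN N le_rfl) (fun k _ hk => ?_) n h.le
  have := hrec (k - 1)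
  rw [sub_add_cancel, hk, mul_zero] at this
  exact (mul_eq_zero.mp this).resolve_left (hβ _)

theorem norm_le_norm_succ_of_mul_eq_mul_succ (hlam : lam ≠ 0) (hrec : β n * a n = lam * a (n + 1))
    (h : ‖lam‖ ≤ ‖β n‖) : ‖a n‖ ≤ ‖a (n + 1)‖ := by
  refine le_of_mul_le_mul_left ?_ (norm_pos_iff.mpr hlam)
  calc ‖lam‖ * ‖a n‖ ≤ ‖β n‖ * ‖a n‖ := by gcongr
    _ = ‖lam‖ * ‖a (n + 1)‖ := by rw [← norm_mul, ← norm_mul, hrec]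

theorem norm_succ_le_norm_of_mul_eq_mul_succ (hlam : lam ≠ 0) (hrec : β n * a n = lam * a (n + 1))
    (h : ‖β n‖ ≤ ‖lam‖) : ‖a (n + 1)‖ ≤ ‖a n‖ := by
  refine le_of_mul_le_mul_left ?_ (norm_pos_iff.mpr hlam)
  calc ‖lam‖ * ‖a (n + 1)‖ = ‖β n‖ * ‖a n‖ := by rw [← norm_mul, ← norm_mul, hrec]
    _ ≤ ‖lam‖ * ‖a n‖ := by gcongr

theorem eq_zero_of_mul_eq_mul_succ_of_tendsto (hβ : ∀ n, β n ≠ 0)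
    (hmono : Monotone fun n => ‖β n‖) (hrec : ∀ n, β n * a n = lam * a (n + 1))
    (ha : Tendsto a cofinite (𝓝 0)) : a = 0 := by
  have ha' : Tendsto (fun n => ‖a n‖) cofinite (𝓝 0) := by simpa using ha.norm
  rw [Int.cofinite_eq, tendsto_sup] at ha'
  by_cases hlam : lam = 0
  · funext n
    simpa [hlam, hβ n] using hrec n
  by_cases hlarge : ∃ N, ‖lam‖ ≤ ‖β N‖
  · obtain ⟨N, hN⟩ := hlarge
    have hmonoOn : MonotoneOn (fun n => ‖a n‖) (Set.Ici N) :=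
      monotoneOn_of_le_add_one Set.ordConnected_Ici fun n _ hn _ =>
        norm_le_norm_succ_of_mul_eq_mul_succ hlam (hrec n) (hN.trans (hmono hn))
    refine eq_zero_of_forall_ge_eq_zero_of_mul_eq_mul_succ hβ hrec (N := N) fun m hm => ?_
    refine norm_le_zero_iff.mp (ge_of_tendsto ha'.2 ?_)
    filter_upwards [eventually_ge_atTop m] with n hn
    exact hmonoOn hm (hm.trans hn) hn
  · push Not at hlarge
    have hanti : Antitone fun n => ‖a n‖ := antitone_int_of_succ_le fun n =>
      norm_succ_le_norm_of_mul_eq_mul_succ hlam (hrec n) (hlarge n).le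
    funext m
    refine norm_le_zero_iff.mp (ge_of_tendsto ha'.1 ?_)
    filter_upwards [eventually_le_atBot m] with n hn
    exact hanti hn

end WeightedRecurrence

theorem Orthonormal.tendsto_inner_cofinite {ι 𝕜 E : Type*} [RCLike 𝕜] [NormedAddCommGroup E]
    [InnerProductSpace 𝕜 E] {v : ι → E} (hv : Orthonormal 𝕜 v) (x : E) :
    Tendsto (fun i => inner 𝕜 (v i) x) cofinite (𝓝 0) := by
  rw [tendsto_zero_iff_norm_tendsto_zero]
  simpa [Real.sqrt_sq (norm_nonneg _)] using
    (hv.inner_products_summable x).tendsto_cofinite_zero.sqrt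

section WeightedShift

variable {𝕜 H : Type*} [RCLike 𝕜] [NormedAddCommGroup H] [InnerProductSpace 𝕜 H]

def IsWeightedShift (e : HilbertBasis ℤ 𝕜 H) (β : ℤ → 𝕜) (T : H →L[𝕜] H) : Prop :=
  ∀ n, T (e n) = β n • e (n + 1)

variable {e : HilbertBasis ℤ 𝕜 H} {β : ℤ → 𝕜} {T : H →L[𝕜] H}

theorem IsWeightedShift.inner_succ_apply (hT : IsWeightedShift e β T) (n : ℤ) (x : H) :
    inner 𝕜 (e (n + 1)) (T x) = β n * inner 𝕜 (e n) x := by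
  have : (innerSL 𝕜 (e (n + 1))).comp T = β n • innerSL 𝕜 (e n) := by
    refine ContinuousLinearMap.ext_on
      ((Submodule.dense_iff_topologicalClosure_eq_top).mpr e.dense_span) ?_
    rintro _ ⟨m, rfl⟩
    simp only [ContinuousLinearMap.comp_apply, smul_apply, innerSL_apply_apply,
      hT m, inner_smul_right, orthonormal_iff_ite.mp e.orthonormal, add_left_inj, smul_eq_mul]
    split_ifs with h <;> simp [h]
  exact DFunLike.congr_fun this x

theorem IsWeightedShift.eq_zero_of_apply_eq_smul (hT : IsWeightedShift e β T)
    (hmono : ∀ n, ‖β n‖ ≤ ‖β (n + 1)‖) (hβ : ∀ n, β n ≠ 0) {lam : 𝕜} {x : H}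
    (hx : T x = lam • x) : x = 0 := by
  have hcoeff : (fun n => inner 𝕜 (e n) x) = 0 :=
    eq_zero_of_mul_eq_mul_succ_of_tendsto hβ (monotone_int_of_le_succ hmono)
      (fun n => by rw [← hT.inner_succ_apply, hx, inner_smul_right])
      (e.orthonormal.tendsto_inner_cofinite x)
  rw [← e.repr.map_eq_zero_iff]
  ext n
  simpa [e.repr_apply_apply] using congr_fun hcoeff n

end WeightedShift

theorem pointSpectrum_of_hyponormal_bilateral_weighted_shift_empty_general
    {H : Type*} [NormedAddCommGroup H] [InnerProductSpace ℂ H]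
    (e : HilbertBasis ℤ ℂ H) (β : ℤ → ℂ) (T : H →L[ℂ] H)
    (hT : ∀ n : ℤ, T (e n) = β n • e (n + 1))
    (hmono : ∀ n : ℤ, ‖β n‖ ≤ ‖β (n + 1)‖)
    (hnz : ∀ n : ℤ, β n ≠ 0) :
    (∀ lam : ℂ, LinearMap.ker ((lam • (1 : H →L[ℂ] H) - T : H →L[ℂ] H) : H →ₗ[ℂ] H) = ⊥) ∧
      {lam : ℂ | ∃ x : H, x ≠ 0 ∧ T x = lam • x} = ∅ := by
  have no_eigenvector {lam : ℂ} {x : H} (hx : T x = lam • x) : x = 0 :=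
    IsWeightedShift.eq_zero_of_apply_eq_smul hT hmono hnz hx
  refine ⟨fun lam => LinearMap.ker_eq_bot'.mpr fun x hx => no_eigenvector (lam := lam) ?_,
    Set.eq_empty_iff_forall_notMem.mpr fun lam ⟨x, hx0, hx⟩ => hx0 (no_eigenvector hx)⟩
  exact (sub_eq_zero.mp (by simpa using hx)).symm

/-- A hyponormal bilateral weighted shift with nonzero weights has no eigenvalues:
for every `λ`, the kernel of `λI - T` is trivial; equivalently the point spectrum
is empty. -/
theorem pointSpectrum_of_hyponormal_bilateral_weighted_shift_empty
    {H : Type*} [NormedAddCommGroup H] [InnerProductSpace ℂ H] [CompleteSpace H]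
    (e : HilbertBasis ℤ ℂ H) (β : ℤ → ℂ) (T : H →L[ℂ] H)
    (hT : ∀ n : ℤ, T (e n) = β n • e (n + 1))
    (hmono : ∀ n : ℤ, ‖β n‖ ≤ ‖β (n + 1)‖)
    (hnz : ∀ n : ℤ, β n ≠ 0) :
    (∀ lam : ℂ, LinearMap.ker ((lam • (1 : H →L[ℂ] H) - T : H →L[ℂ] H) : H →ₗ[ℂ] H) = ⊥) ∧
      {lam : ℂ | ∃ x : H, x ≠ 0 ∧ T x = lam • x} = ∅ :=
  pointSpectrum_of_hyponormal_bilateral_weighted_shift_empty_general e β T hT hmono hnz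
end
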